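/- arXiv:2003.07898 — 3 statements merged into one kernel-verified Lean document; each statement's English description precedes it below -/
import Mathlib

section
/- Let r ≥ 2 and 1 ≤ k ≤ r−1. Let (a_j)_{j=1}^{r+1} and (b_j)_{j=1}^{r+1} be real numbers with ∑_j a_j² = 1 and ∑_j b_j² = 1, and suppose a_k < 1, b_k < 1. Let (d_j^*)_{j=1}^{r} be positive reals with ω := d_{k+1}^*/d_k^* < 1 and d_j^* ≤ d_{k+1}^* for all k+1 ≤ j ≤ r. If ∑_{j=k+1}^{r} (d_j^*/d_k^*)·a_j·b_j ≠ 0, then (1 − a_k·b_k)² / (∑_{j=k+1}^{r} (d_j^*/d_k^*)·a_j·b_j)² ≥ ω^{−2}. -/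
open Finset

/-!
Cauchy–Schwarz bounds the square of the weighted tail sum by `ω²` times the product of the
tail masses `∑ a_j² ≤ 1 - a_k²` and `∑ b_j² ≤ 1 - b_k²`, and
`(1 - a_k²)(1 - b_k²) = (1 - a_k b_k)² - (a_k - b_k)²`.
-/

theorem sum_sq_le_one_sub_sq {ι : Type*} [DecidableEq ι] {s t : Finset ι} {k : ι}
    (a : ι → ℝ) (hk : k ∈ t) (hks : k ∉ s) (hst : s ⊆ t) (ha : ∑ j ∈ t, a j ^ 2 = 1) :
    ∑ j ∈ s, a j ^ 2 ≤ 1 - a k ^ 2 := by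
  have h := sum_le_sum_of_subset_of_nonneg (f := fun j ↦ a j ^ 2) (insert_subset hk hst)
    fun j _ _ ↦ sq_nonneg (a j)
  rw [sum_insert hks] at h
  linarith

theorem one_sub_sq_mul_one_sub_sq_le (x y : ℝ) :
    (1 - x ^ 2) * (1 - y ^ 2) ≤ (1 - x * y) ^ 2 := by
  nlinarith [sq_nonneg (x - y)]

theorem sq_sum_mul_mul_le {ι : Type*} (s : Finset ι) (w a b : ι → ℝ) {c : ℝ}
    (hw : ∀ j ∈ s, |w j| ≤ c) :
    (∑ j ∈ s, w j * a j * b j) ^ 2 ≤ c ^ 2 * (∑ j ∈ s, a j ^ 2) * ∑ j ∈ s, b j ^ 2 := by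
  have hwa : ∑ j ∈ s, (w j * a j) ^ 2 ≤ c ^ 2 * ∑ j ∈ s, a j ^ 2 := by
    rw [mul_sum]
    refine sum_le_sum fun j hj ↦ ?_
    rw [mul_pow]
    exact mul_le_mul_of_nonneg_right (sq_le_sq.mpr ((hw j hj).trans (le_abs_self c))) (sq_nonneg _)
  calc (∑ j ∈ s, w j * a j * b j) ^ 2
      ≤ (∑ j ∈ s, (w j * a j) ^ 2) * ∑ j ∈ s, b j ^ 2 := sum_mul_sq_le_sq_mul_sq s _ b
    _ ≤ c ^ 2 * (∑ j ∈ s, a j ^ 2) * ∑ j ∈ s, b j ^ 2 :=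
      mul_le_mul_of_nonneg_right hwa (sum_nonneg fun j _ ↦ sq_nonneg _)

theorem sq_sum_mul_mul_le_mul_one_sub_mul_sq {ι : Type*} (s : Finset ι) (w a b : ι → ℝ)
    {c x y : ℝ} (hw : ∀ j ∈ s, |w j| ≤ c)
    (ha : ∑ j ∈ s, a j ^ 2 ≤ 1 - x ^ 2) (hb : ∑ j ∈ s, b j ^ 2 ≤ 1 - y ^ 2) :
    (∑ j ∈ s, w j * a j * b j) ^ 2 ≤ c ^ 2 * (1 - x * y) ^ 2 := by
  have ha₀ : 0 ≤ ∑ j ∈ s, a j ^ 2 := sum_nonneg fun j _ ↦ sq_nonneg _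
  have hb₀ : 0 ≤ ∑ j ∈ s, b j ^ 2 := sum_nonneg fun j _ ↦ sq_nonneg _
  have hab : (∑ j ∈ s, a j ^ 2) * ∑ j ∈ s, b j ^ 2 ≤ (1 - x * y) ^ 2 :=
    (mul_le_mul ha hb hb₀ (ha₀.trans ha)).trans (one_sub_sq_mul_one_sub_sq_le x y)
  calc (∑ j ∈ s, w j * a j * b j) ^ 2
      ≤ c ^ 2 * (∑ j ∈ s, a j ^ 2) * ∑ j ∈ s, b j ^ 2 := sq_sum_mul_mul_le s w a b hw
    _ ≤ c ^ 2 * (1 - x * y) ^ 2 := by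
      rw [mul_assoc]; exact mul_le_mul_of_nonneg_left hab (sq_nonneg c)

theorem deflation_central_inequality_general
    (r k : ℕ) (hk1 : 1 ≤ k) (hkr : k ≤ r - 1)
    (a b : ℕ → ℝ) (d : ℕ → ℝ)
    (ha : ∑ j ∈ Icc 1 (r + 1), (a j) ^ 2 = 1)
    (hb : ∑ j ∈ Icc 1 (r + 1), (b j) ^ 2 = 1)
    (hd : ∀ j ∈ Icc 1 r, 0 < d j)
    (hmono : ∀ j ∈ Icc (k + 1) r, d j ≤ d (k + 1))
    (hS : ∑ j ∈ Icc (k + 1) r, d j / d k * a j * b j ≠ 0) :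
    ((d (k + 1) / d k)⁻¹) ^ 2 ≤
      (1 - a k * b k) ^ 2 / (∑ j ∈ Icc (k + 1) r, d j / d k * a j * b j) ^ 2 := by
  have hk : k ∈ Icc 1 (r + 1) := by simp only [mem_Icc]; omega
  have hks : k ∉ Icc (k + 1) r := by simp
  have hst : Icc (k + 1) r ⊆ Icc 1 (r + 1) := Icc_subset_Icc (by omega) (by omega)
  have hdk : 0 < d k := hd k (by simp only [mem_Icc]; omega)
  have hω : 0 < d (k + 1) / d k := div_pos (hd (k + 1) (by simp only [mem_Icc]; omega)) hdk
  have hw : ∀ j ∈ Icc (k + 1) r, |d j / d k| ≤ d (k + 1) / d k := fun j hj ↦ by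
    have hdj : 0 < d j := hd j (by simp only [mem_Icc] at hj ⊢; omega)
    rw [abs_of_pos (div_pos hdj hdk)]
    exact div_le_div_of_nonneg_right (hmono j hj) hdk.le
  have key := sq_sum_mul_mul_le_mul_one_sub_mul_sq _ _ a b hw
    (sum_sq_le_one_sub_sq a hk hks hst ha) (sum_sq_le_one_sub_sq b hk hks hst hb)
  rw [inv_pow, ← one_div, div_le_div_iff₀ (by positivity) (by positivity)]
  linarith

/-- Central inequality in the proof of Lemma 1 (deflation control):
`(1 - a_k b_k)² / (∑_{j=k+1}^r (d_j/d_k) a_j b_j)² ≥ ω⁻²` with `ω = d_{k+1}/d_k`. -/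
theorem deflation_central_inequality
    (r k : ℕ) (hr : 2 ≤ r) (hk1 : 1 ≤ k) (hkr : k ≤ r - 1)
    (a b : ℕ → ℝ) (d : ℕ → ℝ)
    (ha : ∑ j ∈ Icc 1 (r + 1), (a j) ^ 2 = 1)
    (hb : ∑ j ∈ Icc 1 (r + 1), (b j) ^ 2 = 1)
    (hak : a k < 1) (hbk : b k < 1)
    (hd : ∀ j ∈ Icc 1 r, 0 < d j)
    (hω : d (k + 1) / d k < 1)
    (hmono : ∀ j ∈ Icc (k + 1) r, d j ≤ d (k + 1))
    (hS : ∑ j ∈ Icc (k + 1) r, d j / d k * a j * b j ≠ 0) :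
    ((d (k + 1) / d k)⁻¹) ^ 2 ≤
      (1 - a k * b k) ^ 2 / (∑ j ∈ Icc (k + 1) r, d j / d k * a j * b j) ^ 2 :=
  deflation_central_inequality_general r k hk1 hkr a b d ha hb hd hmono hS
end

section
/- Let C, C̃ ∈ ℝ^{p×q}, and let (d_k, u_k, v_k) and (d̃_k, ũ_k, ṽ_k) satisfy d_k·u_k = C·v_k and d̃_k·ũ_k = C̃·ṽ_k with ‖v_k‖₂ = ‖ṽ_k‖₂ = 1. Denote by d_c the largest singular value of C. Then ‖d̃_k·ũ_k·ṽ_kᵀ − d_k·u_k·v_kᵀ‖_F ≤ 2·d_c·‖ṽ_k − v_k‖₂ + ‖C̃ − C‖_F, provided d_k·‖u_k‖₂ ≤ d_c. -/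
/-- Euclidean norm of a vector. -/
noncomputable def enorm' {n : ℕ} (x : Fin n → ℝ) : ℝ :=
  Real.sqrt (∑ i, (x i) ^ 2)

/-- Frobenius norm of a matrix. -/
noncomputable def frob {n m : ℕ} (M : Matrix (Fin n) (Fin m) ℝ) : ℝ :=
  Real.sqrt (∑ i, ∑ j, (M i j) ^ 2)

/-!
Splitting `d̃ ũ ṽᵀ − d u vᵀ = (C v)(ṽ − v)ᵀ + (C (ṽ − v) + (C̃ − C) ṽ) ṽᵀ`, the Frobenius norm of
each rank-one term is the product of the Euclidean norms of its factors. The first is at most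
`d_c ‖ṽ − v‖₂`, and by the triangle inequality so is `‖C (ṽ − v)‖₂` in the second, while
`‖(C̃ − C) ṽ‖₂ ≤ ‖C̃ − C‖_F` by Cauchy–Schwarz row by row.
-/

open Matrix

theorem Real.sqrt_sum_sq_add_le {ι : Type*} [Fintype ι] (a b : ι → ℝ) :
    √(∑ i, (a i + b i) ^ 2) ≤ √(∑ i, a i ^ 2) + √(∑ i, b i ^ 2) := by
  simpa [EuclideanSpace.norm_eq, Real.norm_eq_abs, sq_abs] using
    norm_add_le (WithLp.toLp 2 a) (WithLp.toLp 2 b)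

theorem enorm'_add_le {n : ℕ} (a b : Fin n → ℝ) : enorm' (a + b) ≤ enorm' a + enorm' b :=
  Real.sqrt_sum_sq_add_le a b

theorem frob_add_le {n m : ℕ} (A B : Matrix (Fin n) (Fin m) ℝ) :
    frob (A + B) ≤ frob A + frob B := by
  simpa [frob, Fintype.sum_prod_type] using
    Real.sqrt_sum_sq_add_le (fun ij : Fin n × Fin m => A ij.1 ij.2) (fun ij => B ij.1 ij.2)

theorem frob_vecMulVec {n m : ℕ} (x : Fin n → ℝ) (y : Fin m → ℝ) :
    frob (vecMulVec x y) = enorm' x * enorm' y := by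
  rw [frob, enorm', enorm', ← Real.sqrt_mul (by positivity), Finset.sum_mul]
  simp only [vecMulVec_apply, mul_pow, Finset.mul_sum]

theorem enorm'_mulVec_le_frob_mul {n m : ℕ} (M : Matrix (Fin n) (Fin m) ℝ) (x : Fin m → ℝ) :
    enorm' (M *ᵥ x) ≤ frob M * enorm' x := by
  rw [enorm', frob, enorm', ← Real.sqrt_mul (by positivity), Finset.sum_mul]
  gcongr with i
  exact Finset.sum_mul_sq_le_sq_mul_sq Finset.univ (M i) x

theorem vecMulVec_sub_vecMulVec {α m n : Type*} [CommRing α] (a b : m → α) (x y : n → α) :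
    vecMulVec b y - vecMulVec a x = vecMulVec a (y - x) + vecMulVec (b - a) y := by
  ext i j
  simp only [Matrix.sub_apply, Matrix.add_apply, vecMulVec_apply, Pi.sub_apply]
  ring

theorem unit_rank_perturbation_bound_general {p q : ℕ}
    (C Ct : Matrix (Fin p) (Fin q) ℝ) (dc d dt : ℝ)
    (u ut : Fin p → ℝ) (v vt : Fin q → ℝ)
    (hv : enorm' v = 1) (hvt : enorm' vt = 1)
    (huv : d • u = C.mulVec v) (hutvt : dt • ut = Ct.mulVec vt)
    (hop : ∀ w : Fin q → ℝ, enorm' (C.mulVec w) ≤ dc * enorm' w) :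
    frob (fun i j => dt * ut i * vt j - d * u i * v j) ≤
      2 * dc * enorm' (fun k => vt k - v k) + frob (Ct - C) := by
  have hsplit : (fun i j => dt * ut i * vt j - d * u i * v j : Matrix (Fin p) (Fin q) ℝ) =
      vecMulVec (C *ᵥ v) (vt - v) + vecMulVec (C *ᵥ (vt - v) + (Ct - C) *ᵥ vt) vt := by
    rw [mulVec_sub, sub_mulVec, ← huv, ← hutvt, sub_add_sub_cancel',
      ← vecMulVec_sub_vecMulVec]
    ext i j
    simp only [Matrix.sub_apply, vecMulVec_apply, Pi.smul_apply, smul_eq_mul]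
  have hCv : enorm' (C *ᵥ v) ≤ dc := by simpa [hv] using hop v
  have hCtC : enorm' ((Ct - C) *ᵥ vt) ≤ frob (Ct - C) := by
    simpa [hvt] using enorm'_mulVec_le_frob_mul (Ct - C) vt
  change _ ≤ 2 * dc * enorm' (vt - v) + _
  have hdv : 0 ≤ enorm' (vt - v) := Real.sqrt_nonneg _
  calc frob _ ≤ enorm' (C *ᵥ v) * enorm' (vt - v)
          + enorm' (C *ᵥ (vt - v) + (Ct - C) *ᵥ vt) * enorm' vt := by
        rw [hsplit, ← frob_vecMulVec, ← frob_vecMulVec]; exact frob_add_le _ _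
    _ ≤ dc * enorm' (vt - v) + (enorm' (C *ᵥ (vt - v)) + enorm' ((Ct - C) *ᵥ vt)) := by
        rw [hvt, mul_one]; gcongr; exact enorm'_add_le _ _
    _ ≤ 2 * dc * enorm' (vt - v) + frob (Ct - C) := by linarith [hop (vt - v)]

/-- Perturbation bound from the proof of Lemma 4:
`‖d̃ ũ ṽᵀ − d u vᵀ‖_F ≤ 2 d_c ‖ṽ − v‖₂ + ‖C̃ − C‖_F`, where `d u = C v`,
`d̃ ũ = C̃ ṽ`, `‖v‖₂ = ‖ṽ‖₂ = 1`, `d_c` bounds the operator norm of `C`,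
and `d ‖u‖₂ ≤ d_c`. -/
theorem unit_rank_perturbation_bound {p q : ℕ}
    (C Ct : Matrix (Fin p) (Fin q) ℝ) (dc d dt : ℝ)
    (u ut : Fin p → ℝ) (v vt : Fin q → ℝ)
    (hv : enorm' v = 1) (hvt : enorm' vt = 1)
    (huv : d • u = C.mulVec v) (hutvt : dt • ut = Ct.mulVec vt)
    (hop : ∀ w : Fin q → ℝ, enorm' (C.mulVec w) ≤ dc * enorm' w)
    (hdu : d * enorm' u ≤ dc) :
    frob (fun i j => dt * ut i * vt j - d * u i * v j) ≤
      2 * dc * enorm' (fun k => vt k - v k) + frob (Ct - C) :=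
  unit_rank_perturbation_bound_general C Ct dc d dt u ut v vt hv hvt huv hutvt hop
end

section
/- Let A, B ∈ ℝ^{p×q}, let S_A be the index set of the s entries of A of largest absolute value, and let J be the support of B with |J| ≤ s. Suppose ‖A − B‖_F ≤ M. Then ‖B_{J ∩ S_A^c}‖_F ≤ 2M, where B_K zeroes out entries outside K. -/
open Finset

/-!
Let `J = supp B`. Since `|J| ≤ |S_A|`, the set `J \ S_A` has at most as many entries as
`S_A \ J`, and every entry of `A` on `J \ S_A` is dominated by every entry of `A` on `S_A \ J`;
hence `‖A_{J \ S_A}‖ ≤ ‖A_{S_A \ J}‖ = ‖(A - B)_{S_A \ J}‖ ≤ M`, because `B` vanishes off `J`.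
The triangle inequality `‖B_{J \ S_A}‖ ≤ ‖(B - A)_{J \ S_A}‖ + ‖A_{J \ S_A}‖` gives `2M`.
-/

theorem Finset.sum_le_sum_of_card_le_of_forall_le {ι M : Type*} [AddCommMonoid M]
    [LinearOrder M] [IsOrderedAddMonoid M] {s t : Finset ι} {f : ι → M} (hcard : #s ≤ #t)
    (ht : ∀ j ∈ t, 0 ≤ f j) (hle : ∀ i ∈ s, ∀ j ∈ t, f i ≤ f j) :
    ∑ i ∈ s, f i ≤ ∑ j ∈ t, f j := by
  rcases t.eq_empty_or_nonempty with rfl | htne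
  · rw [card_empty, Nat.le_zero, card_eq_zero] at hcard
    simp [hcard]
  calc ∑ i ∈ s, f i ≤ #s • t.inf' htne f :=
        sum_le_card_nsmul _ _ _ fun i hi => le_inf' _ _ (hle i hi)
    _ ≤ #t • t.inf' htne f := nsmul_le_nsmul_left (le_inf' _ _ ht) hcard
    _ ≤ ∑ j ∈ t, f j := card_nsmul_le_sum _ _ _ fun j hj => inf'_le _ hj

theorem Real.sqrt_sum_sq_add_le_s17 {ι : Type*} (s : Finset ι) (f g : ι → ℝ) :
    √(∑ i ∈ s, (f i + g i) ^ 2) ≤ √(∑ i ∈ s, f i ^ 2) + √(∑ i ∈ s, g i ^ 2) := by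
  let toEuclidean (h : ι → ℝ) : EuclideanSpace ℝ s := WithLp.toLp 2 fun i => h i
  have norm_toEuclidean (h : ι → ℝ) : ‖toEuclidean h‖ = √(∑ i ∈ s, h i ^ 2) := by
    simp [toEuclidean, EuclideanSpace.norm_eq, sum_attach s fun i => h i ^ 2]
  calc √(∑ i ∈ s, (f i + g i) ^ 2) = ‖toEuclidean f + toEuclidean g‖ :=
        (norm_toEuclidean (f + g)).symm
    _ ≤ ‖toEuclidean f‖ + ‖toEuclidean g‖ := norm_add_le _ _
    _ = √(∑ i ∈ s, f i ^ 2) + √(∑ i ∈ s, g i ^ 2) := by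
        rw [norm_toEuclidean, norm_toEuclidean]

theorem sum_sq_sdiff_le_sum_sq_sub_of_forall_abs_le {ι : Type*} [Fintype ι] [DecidableEq ι]
    {A B : ι → ℝ} {S J : Finset ι} (hS : ∀ a ∈ S, ∀ b ∉ S, |A b| ≤ |A a|)
    (hJ : ∀ i ∉ J, B i = 0) (hcard : #J ≤ #S) :
    ∑ i ∈ J \ S, A i ^ 2 ≤ ∑ i, (A i - B i) ^ 2 :=
  calc ∑ i ∈ J \ S, A i ^ 2 ≤ ∑ i ∈ S \ J, A i ^ 2 :=
        sum_le_sum_of_card_le_of_forall_le (card_sdiff_le_card_sdiff_iff.2 hcard)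
          (fun _ _ => sq_nonneg _)
          fun i hi j hj => sq_le_sq.2 (hS j (mem_sdiff.1 hj).1 i (mem_sdiff.1 hi).2)
    _ = ∑ i ∈ S \ J, (A i - B i) ^ 2 :=
        sum_congr rfl fun i hi => by rw [hJ i (mem_sdiff.1 hi).2, sub_zero]
    _ ≤ ∑ i, (A i - B i) ^ 2 :=
        sum_le_sum_of_subset_of_nonneg (subset_univ _) fun _ _ _ => sq_nonneg _

/-- Thresholding stability (inequality used in the proof of Theorem 2): if `S_A`
collects the `s` entries of `A` of largest absolute value, `J = supp(B)` has
`|J| ≤ s`, and `‖A - B‖_F ≤ M`, then `‖B_{J ∩ S_Aᶜ}‖_F ≤ 2M`. -/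
theorem thresholding_stability {p q : ℕ} (A B : Fin p × Fin q → ℝ)
    (s : ℕ) (M : ℝ)
    (SA : Finset (Fin p × Fin q)) (hSAcard : SA.card = s)
    (hSAtop : ∀ a ∈ SA, ∀ b ∉ SA, |A b| ≤ |A a|)
    (hJ : (univ.filter (fun i => B i ≠ 0)).card ≤ s)
    (hAB : Real.sqrt (∑ i, (A i - B i) ^ 2) ≤ M) :
    Real.sqrt (∑ i ∈ (univ.filter (fun i => B i ≠ 0)) \ SA, (B i) ^ 2) ≤ 2 * M := by
  set K := (univ.filter (fun i => B i ≠ 0)) \ SA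
  have hA : ∑ i ∈ K, A i ^ 2 ≤ ∑ i, (A i - B i) ^ 2 :=
    sum_sq_sdiff_le_sum_sq_sub_of_forall_abs_le hSAtop (fun i hi => by simpa using hi)
      (hSAcard ▸ hJ)
  have hBA : ∑ i ∈ K, (B i - A i) ^ 2 ≤ ∑ i, (A i - B i) ^ 2 := by
    simp_rw [sub_sq_comm (B _)]
    exact sum_le_sum_of_subset_of_nonneg (subset_univ _) fun _ _ _ => sq_nonneg _
  calc √(∑ i ∈ K, B i ^ 2) = √(∑ i ∈ K, ((B i - A i) + A i) ^ 2) := by simp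
    _ ≤ √(∑ i ∈ K, (B i - A i) ^ 2) + √(∑ i ∈ K, A i ^ 2) := Real.sqrt_sum_sq_add_le_s17 _ _ _
    _ ≤ M + M :=
        add_le_add ((Real.sqrt_le_sqrt hBA).trans hAB) ((Real.sqrt_le_sqrt hA).trans hAB)
    _ = 2 * M := by ring
end
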